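/- arXiv:2312.00328 — 3 statements merged into one kernel-verified Lean document; each statement's English description precedes it below -/
import Mathlib

section
/- Suppose A ∈ ℝ^{n×n} is stable, G, H ∈ ℝ^{n×n} are symmetric positive semidefinite, and X, X̂ are symmetric matrices with X̂ ≥ 0 satisfying (Aᵀ − X̂G)X̂ + X̂(A − GX̂) ≤ −H − X̂GX̂. If additionally the pair (H, A) is detectable (i.e., Ax = λx with Re(λ) ≥ 0 and Hx = 0 implies x = 0), then the matrix A − GX̂ is stable. -/
/-!
Let `B = A - G X̂` and let `x` be an eigenvector of `B` for an eigenvalue `μ` with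
`Re μ ≥ 0`. Since `Bᴴ = Aᵀ - X̂ G`, the hypothesis says `Bᴴ X̂ + X̂ B ≤ -H - X̂ G X̂`, and testing
it against `x` gives `x* H x + (X̂ x)* G (X̂ x) + 2 Re μ · x* X̂ x ≤ 0`. All three terms are
nonnegative, so `H x = 0` and `G X̂ x = 0`; hence `A x = B x = μ x`, and detectability forces `x = 0`.
-/

open Matrix
open scoped ComplexOrder

namespace Matrix

theorem exists_mulVec_eq_smul_of_mem_spectrum {ι K : Type*} [Fintype ι] [DecidableEq ι]
    [Field K] {M : Matrix ι ι K} {μ : K} (hμ : μ ∈ spectrum K M) : ∃ x ≠ 0, M *ᵥ x = μ • x := by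
  rw [← spectrum_toLin', ← Module.End.hasEigenvalue_iff_mem_spectrum] at hμ
  obtain ⟨x, hx⟩ := hμ.exists_hasEigenvector
  exact ⟨x, hx.2, hx.apply_eq_smul⟩

section OfReal

variable {ι : Type*}

theorem conjTranspose_map_ofReal (M : Matrix ι ι ℝ) :
    (M.map Complex.ofReal)ᴴ = Mᵀ.map Complex.ofReal := by
  ext i j
  simp

theorem map_ofReal_mul [Fintype ι] (M N : Matrix ι ι ℝ) :
    (M * N).map Complex.ofReal = M.map Complex.ofReal * N.map Complex.ofReal :=
  Matrix.map_mul (f := Complex.ofRealHom)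

theorem PosSemidef.map_ofReal [Fintype ι] [DecidableEq ι] {M : Matrix ι ι ℝ}
    (hM : M.PosSemidef) : (M.map Complex.ofReal).PosSemidef := by
  open scoped MatrixOrder in
  obtain ⟨B, rfl⟩ := CStarAlgebra.nonneg_iff_eq_star_mul_self.mp hM.nonneg
  rw [star_eq_conjTranspose, conjTranspose_eq_transpose_of_trivial,
    map_ofReal_mul, ← conjTranspose_map_ofReal]
  exact posSemidef_conjTranspose_mul_self _

end OfReal

section RCLike

variable {ι 𝕜 : Type*} [Fintype ι] [RCLike 𝕜]

theorem dotProduct_mul_mulVec_of_mulVec_eq_smul {B X : Matrix ι ι 𝕜} {x : ι → 𝕜} {μ : 𝕜}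
    (hx : B *ᵥ x = μ • x) : star x ⬝ᵥ (X * B) *ᵥ x = μ * (star x ⬝ᵥ X *ᵥ x) := by
  rw [← mulVec_mulVec, hx, mulVec_smul, dotProduct_smul, smul_eq_mul]

theorem dotProduct_conjTranspose_mul_mulVec_of_mulVec_eq_smul {B X : Matrix ι ι 𝕜}
    {x : ι → 𝕜} {μ : 𝕜} (hx : B *ᵥ x = μ • x) :
    star x ⬝ᵥ (Bᴴ * X) *ᵥ x = star μ * (star x ⬝ᵥ X *ᵥ x) := by
  rw [← mulVec_mulVec, dotProduct_mulVec, ← star_mulVec, hx, star_smul, smul_dotProduct,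
    smul_eq_mul]

theorem mulVec_eq_zero_of_lyapunov_ineq {B G H X : Matrix ι ι 𝕜}
    (hG : G.PosSemidef) (hH : H.PosSemidef) (hX : X.PosSemidef)
    (hineq : ((-H - X * G * X) - (Bᴴ * X + X * B)).PosSemidef)
    {x : ι → 𝕜} {μ : 𝕜} (hx : B *ᵥ x = μ • x) (hμ : 0 ≤ RCLike.re μ) :
    H *ᵥ x = 0 ∧ G *ᵥ (X *ᵥ x) = 0 := by
  have hXGX : star x ⬝ᵥ (X * G * X) *ᵥ x = star (X *ᵥ x) ⬝ᵥ G *ᵥ (X *ᵥ x) := by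
    rw [← mulVec_mulVec, ← mulVec_mulVec, star_mulVec, hX.isHermitian.eq, dotProduct_mulVec]
  have hsum : star x ⬝ᵥ H *ᵥ x + star (X *ᵥ x) ⬝ᵥ G *ᵥ (X *ᵥ x)
      + ((2 * RCLike.re μ : ℝ) : 𝕜) * (star x ⬝ᵥ X *ᵥ x) ≤ 0 := by
    have := hineq.dotProduct_mulVec_nonneg x
    rw [sub_mulVec, sub_mulVec, add_mulVec, neg_mulVec, dotProduct_sub, dotProduct_sub,
      dotProduct_add, dotProduct_neg, dotProduct_mul_mulVec_of_mulVec_eq_smul hx,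
      dotProduct_conjTranspose_mul_mulVec_of_mulVec_eq_smul hx, hXGX] at this
    have hre : ((2 * RCLike.re μ : ℝ) : 𝕜) = star μ + μ := by
      rw [add_comm, RCLike.star_def, RCLike.add_conj]; push_cast; rfl
    rw [hre]
    linear_combination this
  have hh := hH.dotProduct_mulVec_nonneg x
  have hg := hG.dotProduct_mulVec_nonneg (X *ᵥ x)
  have hs : 0 ≤ ((2 * RCLike.re μ : ℝ) : 𝕜) * (star x ⬝ᵥ X *ᵥ x) :=
    mul_nonneg (RCLike.ofReal_nonneg.mpr (by positivity)) (hX.dotProduct_mulVec_nonneg x)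
  obtain ⟨hHGX, -⟩ := (add_eq_zero_iff_of_nonneg (add_nonneg hh hg) hs).mp
    (hsum.antisymm (add_nonneg (add_nonneg hh hg) hs))
  obtain ⟨hHx, hGXx⟩ := (add_eq_zero_iff_of_nonneg hh hg).mp hHGX
  exact ⟨(hH.dotProduct_mulVec_zero_iff x).mp hHx, (hG.dotProduct_mulVec_zero_iff _).mp hGXx⟩

theorem mulVec_eq_smul_of_riccati_ineq {A G H X : Matrix ι ι 𝕜}
    (hG : G.PosSemidef) (hH : H.PosSemidef) (hX : X.PosSemidef)
    (hineq : ((-H - X * G * X) - ((Aᴴ - X * G) * X + X * (A - G * X))).PosSemidef)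
    {x : ι → 𝕜} {μ : 𝕜} (hx : (A - G * X) *ᵥ x = μ • x) (hμ : 0 ≤ RCLike.re μ) :
    A *ᵥ x = μ • x ∧ H *ᵥ x = 0 := by
  have hB : (A - G * X)ᴴ = Aᴴ - X * G := by
    rw [conjTranspose_sub, conjTranspose_mul, hG.isHermitian.eq, hX.isHermitian.eq]
  rw [← hB] at hineq
  obtain ⟨hHx, hGXx⟩ := mulVec_eq_zero_of_lyapunov_ineq hG hH hX hineq hx hμ
  refine ⟨?_, hHx⟩
  rw [sub_mulVec, ← mulVec_mulVec, hGXx, sub_zero] at hx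
  exact hx

end RCLike

end Matrix

theorem stmt_5_general {n : ℕ} (A G H Xh : Matrix (Fin n) (Fin n) ℝ)
    (hG : G.PosSemidef) (hH : H.PosSemidef) (hXh : Xh.PosSemidef)
    (hineq : ((-H - Xh * G * Xh) - ((Aᵀ - Xh * G) * Xh + Xh * (A - G * Xh))).PosSemidef)
    (hdet : ∀ (lam : ℂ) (x : Fin n → ℂ), (A.map Complex.ofReal) *ᵥ x = lam • x →
      0 ≤ lam.re → (H.map Complex.ofReal) *ᵥ x = 0 → x = 0) :
    ∀ μ ∈ spectrum ℂ ((A - G * Xh).map Complex.ofReal), μ.re < 0 := by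
  intro μ hμ
  by_contra! hre
  rw [Matrix.map_sub _ Complex.ofReal_sub, map_ofReal_mul] at hμ
  obtain ⟨x, hx0, hx⟩ := exists_mulVec_eq_smul_of_mem_spectrum hμ
  have hineqC := hineq.map_ofReal
  simp only [Matrix.map_sub _ Complex.ofReal_sub, Matrix.map_add _ Complex.ofReal_add,
    Matrix.map_neg _ Complex.ofReal_neg, map_ofReal_mul, ← conjTranspose_map_ofReal] at hineqC
  obtain ⟨hAx, hHx⟩ :=
    mulVec_eq_smul_of_riccati_ineq hG.map_ofReal hH.map_ofReal hXh.map_ofReal hineqC hx hre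
  exact hx0 (hdet μ x hAx hre hHx)

/-- If `A` is stable, `G, H` are symmetric PSD, `X̂ ≥ 0` is symmetric with
`(Aᵀ − X̂G)X̂ + X̂(A − GX̂) ≤ −H − X̂GX̂` and `(H, A)` is detectable, then
`A − GX̂` is stable. -/
theorem stmt_5 {n : ℕ} (A G H Xh : Matrix (Fin n) (Fin n) ℝ)
    (hA : ∀ μ ∈ spectrum ℂ (A.map Complex.ofReal), μ.re < 0)
    (hG : G.PosSemidef) (hH : H.PosSemidef) (hXh : Xh.PosSemidef)
    (hineq : ((-H - Xh * G * Xh) - ((Aᵀ - Xh * G) * Xh + Xh * (A - G * Xh))).PosSemidef)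
    (hdet : ∀ (lam : ℂ) (x : Fin n → ℂ), (A.map Complex.ofReal) *ᵥ x = lam • x →
      0 ≤ lam.re → (H.map Complex.ofReal) *ᵥ x = 0 → x = 0) :
    ∀ μ ∈ spectrum ℂ ((A - G * Xh).map Complex.ofReal), μ.re < 0 :=
  stmt_5_general A G H Xh hG hH hXh hineq hdet
end

section
/- Let Q, L, R be such that R > 0 and Q − L R⁻¹ Lᵀ = CᵀC for some matrix C, let X ≥ 0 be symmetric PSD, and define Π(X) as the PSD block matrix built from matrices A_0^i, B_0^i. Set L_c = L + Π₁₂(X), R_c = R + Π₂₂(X), Q_c = Q + Π₁₁(X). Then Λ(X) := (Q − CᵀC + Π₁₁(X)) − L_c R_c⁻¹ L_cᵀ ≥ 0 and H_c(X) := Q_c − L_c R_c⁻¹ L_cᵀ = CᵀC + Λ(X) ≥ 0. -/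
/-!
Since `Q - CᵀC = L R⁻¹ Lᵀ`, the matrix `Λ(X)` is the Schur complement of `R_c` in
`[L R⁻¹ Lᵀ, L; Lᵀ, R] + Π(X)`. The first summand is PSD because its own Schur complement with
respect to `R` vanishes, and `Π(X)` is a sum of Gram blocks `[A B]ᵀ X [A B]`, so the whole block
matrix is PSD and hence so is `Λ(X)`. Adding `CᵀC` gives `H_c(X)`.
-/

open Matrix

namespace Matrix

variable {ι l m n : Type*} [Fintype l] [Fintype m] [Fintype n]

section Gram

variable {R : Type*} [Ring R] [PartialOrder R] [StarRing R]

theorem PosSemidef.fromBlocks_conjTranspose_mul_mul_same {X : Matrix n n R}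
    (hX : X.PosSemidef) (A : Matrix n l R) (B : Matrix n m R) :
    (fromBlocks (Aᴴ * X * A) (Aᴴ * X * B) (Bᴴ * X * A) (Bᴴ * X * B)).PosSemidef := by
  simpa only [conjTranspose_fromCols_eq_fromRows_conjTranspose, fromRows_mul, mul_fromCols,
    fromRows_fromCols_eq_fromBlocks, fromCols_fromRows_eq_fromBlocks, Matrix.mul_assoc] using
    hX.conjTranspose_mul_mul_same (fromCols A B)

theorem PosSemidef.fromBlocks_sum_conjTranspose_mul_mul_same [Fintype ι] [AddLeftMono R]
    {X : Matrix n n R} (hX : X.PosSemidef) (A : ι → Matrix n l R) (B : ι → Matrix n m R) :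
    (fromBlocks (∑ i, (A i)ᴴ * X * A i) (∑ i, (A i)ᴴ * X * B i)
      (∑ i, (B i)ᴴ * X * A i) (∑ i, (B i)ᴴ * X * B i)).PosSemidef := by
  have hsum : fromBlocks (∑ i, (A i)ᴴ * X * A i) (∑ i, (A i)ᴴ * X * B i)
      (∑ i, (B i)ᴴ * X * A i) (∑ i, (B i)ᴴ * X * B i) =
      ∑ i, fromBlocks ((A i)ᴴ * X * A i) ((A i)ᴴ * X * B i)
        ((B i)ᴴ * X * A i) ((B i)ᴴ * X * B i) := by
    ext (j | j) (k | k) <;>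
      simp only [sum_apply, fromBlocks_apply₁₁, fromBlocks_apply₁₂, fromBlocks_apply₂₁,
        fromBlocks_apply₂₂]
  rw [hsum]
  exact posSemidef_sum _ fun i _ => hX.fromBlocks_conjTranspose_mul_mul_same (A i) (B i)

end Gram

section SchurComplement

variable {K : Type*} [Field K] [PartialOrder K] [StarRing K] [StarOrderedRing K] [DecidableEq m]

theorem PosDef.posSemidef_fromBlocks_mul_inv_mul_conjTranspose {R : Matrix m m K}
    (hR : R.PosDef) (L : Matrix l m K) : (fromBlocks (L * R⁻¹ * Lᴴ) L Lᴴ R).PosSemidef := by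
  have := hR.isUnit.invertible
  exact (PosDef.fromBlocks₂₂ _ L hR).mpr (by simpa using PosSemidef.zero)

theorem PosDef.posSemidef_schurComplement_add {R : Matrix m m K} (hR : R.PosDef)
    (L : Matrix l m K) {P₁₁ : Matrix l l K} {P₁₂ : Matrix l m K} {P₂₂ : Matrix m m K}
    (hP : (fromBlocks P₁₁ P₁₂ P₁₂ᴴ P₂₂).PosSemidef) :
    (L * R⁻¹ * Lᴴ + P₁₁ - (L + P₁₂) * (R + P₂₂)⁻¹ * (L + P₁₂)ᴴ).PosSemidef := by
  have hRP : (R + P₂₂).PosDef := hR.add_posSemidef (hP.submatrix Sum.inr)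
  have := hRP.isUnit.invertible
  refine (PosDef.fromBlocks₂₂ _ _ hRP).mp ?_
  rw [conjTranspose_add, ← fromBlocks_add]
  exact (hR.posSemidef_fromBlocks_mul_inv_mul_conjTranspose L).add hP

end SchurComplement

end Matrix

theorem stmt_8_general {n m p r : ℕ}
    (A0 : Fin r → Matrix (Fin n) (Fin n) ℝ) (B0 : Fin r → Matrix (Fin n) (Fin m) ℝ)
    (Q : Matrix (Fin n) (Fin n) ℝ) (L : Matrix (Fin n) (Fin m) ℝ)
    (R : Matrix (Fin m) (Fin m) ℝ) (C : Matrix (Fin p) (Fin n) ℝ)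
    (X : Matrix (Fin n) (Fin n) ℝ)
    (hR : R.PosDef)
    (hC : Q - L * R⁻¹ * Lᵀ = Cᵀ * C) (hX : X.PosSemidef) :
    let Pi11 := ∑ i, (A0 i)ᵀ * X * A0 i
    let Pi12 := ∑ i, (A0 i)ᵀ * X * B0 i
    let Pi22 := ∑ i, (B0 i)ᵀ * X * B0 i
    let Lc := L + Pi12
    let Rc := R + Pi22
    let Qc := Q + Pi11
    let Lam := (Q - Cᵀ * C + Pi11) - Lc * Rc⁻¹ * Lcᵀ
    Lam.PosSemidef ∧ Qc - Lc * Rc⁻¹ * Lcᵀ = Cᵀ * C + Lam ∧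
      (Qc - Lc * Rc⁻¹ * Lcᵀ).PosSemidef := by
  intro Pi11 Pi12 Pi22 Lc Rc Qc Lam
  have hXt : Xᵀ = X := hX.isHermitian.eq
  have hPi21 : Pi12ᵀ = ∑ i, (B0 i)ᵀ * X * A0 i := by
    simp only [Pi12, transpose_sum, transpose_mul, transpose_transpose, hXt, Matrix.mul_assoc]
  have hPi : (fromBlocks Pi11 Pi12 Pi12ᵀ Pi22).PosSemidef := by
    simpa only [hPi21, conjTranspose_eq_transpose_of_trivial] using
      hX.fromBlocks_sum_conjTranspose_mul_mul_same A0 B0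
  have hLam : Lam.PosSemidef := by
    have hQ : Q - Cᵀ * C = L * R⁻¹ * Lᵀ := by rw [← hC, sub_sub_cancel]
    simpa only [Lam, hQ, conjTranspose_eq_transpose_of_trivial] using
      hR.posSemidef_schurComplement_add L hPi
  have hHc : Qc - Lc * Rc⁻¹ * Lcᵀ = Cᵀ * C + Lam := by simp only [Qc, Lam]; abel
  have hCC : (Cᵀ * C).PosSemidef := by
    simpa only [conjTranspose_eq_transpose_of_trivial] using posSemidef_conjTranspose_mul_self C
  exact ⟨hLam, hHc, hHc ▸ hCC.add hLam⟩

/-- With `Q − LR⁻¹Lᵀ = CᵀC`, `X ≥ 0`, and the shifted data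
`L_c = L + Π₁₂(X)`, `R_c = R + Π₂₂(X)`, `Q_c = Q + Π₁₁(X)`, the matrix
`Λ(X) = (Q − CᵀC + Π₁₁(X)) − L_c R_c⁻¹ L_cᵀ` is PSD and
`H_c(X) = Q_c − L_c R_c⁻¹ L_cᵀ = CᵀC + Λ(X) ≥ 0`. -/
theorem stmt_8 {n m p r : ℕ}
    (A0 : Fin r → Matrix (Fin n) (Fin n) ℝ) (B0 : Fin r → Matrix (Fin n) (Fin m) ℝ)
    (Q : Matrix (Fin n) (Fin n) ℝ) (L : Matrix (Fin n) (Fin m) ℝ)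
    (R : Matrix (Fin m) (Fin m) ℝ) (C : Matrix (Fin p) (Fin n) ℝ)
    (X : Matrix (Fin n) (Fin n) ℝ)
    (hR : R.PosDef) (hQ : Q.IsSymm)
    (hC : Q - L * R⁻¹ * Lᵀ = Cᵀ * C) (hX : X.PosSemidef) :
    let Pi11 := ∑ i, (A0 i)ᵀ * X * A0 i
    let Pi12 := ∑ i, (A0 i)ᵀ * X * B0 i
    let Pi22 := ∑ i, (B0 i)ᵀ * X * B0 i
    let Lc := L + Pi12
    let Rc := R + Pi22
    let Qc := Q + Pi11
    let Lam := (Q - Cᵀ * C + Pi11) - Lc * Rc⁻¹ * Lcᵀ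
    Lam.PosSemidef ∧ Qc - Lc * Rc⁻¹ * Lcᵀ = Cᵀ * C + Lam ∧
      (Qc - Lc * Rc⁻¹ * Lcᵀ).PosSemidef :=
  stmt_8_general A0 B0 Q L R C X hR hC hX
end

section
/- If X and Y are symmetric PSD n×n real matrices with X ≥ Y, then Ω(X) ≥ Ω(Y), where Ω(Z) is the Schur complement of R_c(Z) in Γ(Z) as defined from the SCARE data. Consequently, for any W ∈ ℝ^{2n×n}, Wᵀ Ω(X) W ≥ Wᵀ Ω(Y) W. -/
open Matrix

/-!
`Ω(Z)` is the Schur complement of `R_c(Z)` in `Γ(Z)`, and `Γ(X) - Γ(Y) = ∑ Nᵢᵀ (X - Y) Nᵢ ≥ 0`.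
Schur complements are monotone: the quadratic form of `Γ(X) - Γ(Y)` at
`(x, -R_c(X)⁻¹ C(X)ᵀ x)` is `xᵀ (Ω(X) - Ω(Y)) x` minus an `R_c(Y)`-norm, hence nonnegative.
-/

namespace Matrix

variable {m n R : Type*} [Fintype m] [Fintype n] [DecidableEq n]
  [CommRing R] [PartialOrder R] [StarRing R] [StarOrderedRing R]

theorem PosSemidef.schur_complement_sub_of_fromBlocks_sub
    {P₁ P₂ : Matrix m m R} {C₁ C₂ : Matrix m n R} {R₁ R₂ : Matrix n n R}
    [Invertible R₁] [Invertible R₂] (hR₁ : R₁.IsHermitian) (hR₂ : R₂.PosSemidef)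
    (h : (fromBlocks P₁ C₁ C₁ᴴ R₁ - fromBlocks P₂ C₂ C₂ᴴ R₂).PosSemidef) :
    ((P₁ - C₁ * R₁⁻¹ * C₁ᴴ) - (P₂ - C₂ * R₂⁻¹ * C₂ᴴ)).PosSemidef := by
  have hP : (P₁ - P₂).IsHermitian := congr_arg toBlocks₁₁ h.1
  refine .of_dotProduct_mulVec_nonneg ?_ fun x => ?_
  · have h₁ := isHermitian_mul_mul_conjTranspose C₁ hR₁.inv
    have h₂ := isHermitian_mul_mul_conjTranspose C₂ hR₂.1.inv
    rw [show (P₁ - C₁ * R₁⁻¹ * C₁ᴴ) - (P₂ - C₂ * R₂⁻¹ * C₂ᴴ)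
      = (P₁ - P₂) - C₁ * R₁⁻¹ * C₁ᴴ + C₂ * R₂⁻¹ * C₂ᴴ by abel]
    exact (hP.sub h₁).add h₂
  set y := -((R₁⁻¹ * C₁ᴴ) *ᵥ x)
  have hq₁ := schur_complement_eq₂₂ P₁ C₁ x y hR₁
  have hq₂ := schur_complement_eq₂₂ P₂ C₂ x y hR₂.1
  have hM := h.dotProduct_mulVec_nonneg (x ⊕ᵥ y)
  have hz := hR₂.dotProduct_mulVec_nonneg ((R₂⁻¹ * C₂ᴴ) *ᵥ x + y)
  rw [show (R₁⁻¹ * C₁ᴴ) *ᵥ x + y = 0 from add_neg_cancel _, star_zero, dotProduct_zero,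
    zero_add] at hq₁
  rw [dotProduct_mulVec] at hM hz ⊢
  rw [vecMul_sub, sub_dotProduct, hq₁, hq₂] at hM
  rw [vecMul_sub, sub_dotProduct]
  convert add_nonneg hM hz using 1
  abel

end Matrix

section Scare

variable {ι n m α : Type*} [Fintype ι] [Fintype n] [CommRing α]
  (A : Matrix n n α) (B : Matrix n m α) (Q : Matrix n n α) (L : Matrix n m α)
  (R : Matrix m m α) (A0 : ι → Matrix n n α) (B0 : ι → Matrix n m α)

/-- The paper's `Γ(Z)`, its first two block rows and columns grouped into one `n ⊕ n` block. -/
def scareGamma (Z : Matrix n n α) : Matrix ((n ⊕ n) ⊕ m) ((n ⊕ n) ⊕ m) α :=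
  fromBlocks (fromBlocks 0 (-A) (-Aᵀ) (Q + ∑ i, (A0 i)ᵀ * Z * A0 i))
    (fromRows (-B) (L + ∑ i, (A0 i)ᵀ * Z * B0 i))
    (fromRows (-B) (L + ∑ i, (A0 i)ᵀ * Z * B0 i))ᵀ
    (R + ∑ i, (B0 i)ᵀ * Z * B0 i)

theorem scareGamma_sub_scareGamma {X Y : Matrix n n α} (hXY : (X - Y).IsSymm) :
    scareGamma A B Q L R A0 B0 X - scareGamma A B Q L R A0 B0 Y =
      ∑ i, (fromCols (fromCols 0 (A0 i)) (B0 i))ᵀ * (X - Y) *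
        fromCols (fromCols 0 (A0 i)) (B0 i) := by
  have hBA : ∀ i, (B0 i)ᵀ * (X - Y) * A0 i = ((A0 i)ᵀ * (X - Y) * B0 i)ᵀ := fun i => by
    simp only [transpose_mul, transpose_transpose, hXY.eq, Matrix.mul_assoc]
  simp only [transpose_fromCols, fromRows_mul, mul_fromCols, hBA]
  ext ((i | i) | i) ((j | j) | j) <;>
    simp [scareGamma, Matrix.sum_apply, Matrix.mul_sub, Matrix.sub_mul,
      ← Finset.sum_sub_distrib, -transpose_mul]

theorem posSemidef_scareGamma_sub_scareGamma [Fintype m]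
    [PartialOrder α] [StarRing α] [StarOrderedRing α] [TrivialStar α]
    {X Y : Matrix n n α} (hXY : (X - Y).PosSemidef) :
    (scareGamma A B Q L R A0 B0 X - scareGamma A B Q L R A0 B0 Y).PosSemidef := by
  rw [scareGamma_sub_scareGamma A B Q L R A0 B0 (isHermitian_iff_isSymm.mp hXY.1)]
  exact posSemidef_sum _ fun i _ => by
    simpa only [conjTranspose_eq_transpose_of_trivial] using
      hXY.conjTranspose_mul_mul_same (fromCols (fromCols 0 (A0 i)) (B0 i))

omit [Fintype n] in
theorem fromBlocks_eq_sub_fromRows_mul_inv_mul_transpose [Fintype m] [DecidableEq m]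
    {S : Matrix m m α} (hS : S.IsSymm) :
    fromBlocks (-(B * S⁻¹ * Bᵀ)) (-(A - B * S⁻¹ * Lᵀ)) (-(A - B * S⁻¹ * Lᵀ)ᵀ)
        (Q - L * S⁻¹ * Lᵀ) =
      fromBlocks 0 (-A) (-Aᵀ) Q - fromRows (-B) L * S⁻¹ * (fromRows (-B) L)ᵀ := by
  have hS' : (S⁻¹)ᵀ = S⁻¹ := by rw [transpose_nonsing_inv, hS.eq]
  ext (i | i) (j | j) <;> simp [fromRows_mul, transpose_fromRows, hS', Matrix.mul_assoc] <;> abel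

end Scare

/-- Monotonicity of `Ω`: if `X ≥ Y ≥ 0` then `Ω(X) ≥ Ω(Y)` in the Loewner order,
and consequently `Wᵀ Ω(X) W ≥ Wᵀ Ω(Y) W` for every `W`. -/
theorem stmt_10 {n m r : ℕ}
    (A : Matrix (Fin n) (Fin n) ℝ) (B : Matrix (Fin n) (Fin m) ℝ)
    (Q : Matrix (Fin n) (Fin n) ℝ) (L : Matrix (Fin n) (Fin m) ℝ)
    (R : Matrix (Fin m) (Fin m) ℝ)
    (A0 : Fin r → Matrix (Fin n) (Fin n) ℝ) (B0 : Fin r → Matrix (Fin n) (Fin m) ℝ)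
    (X Y : Matrix (Fin n) (Fin n) ℝ)
    (hR : R.PosDef) (hX : X.PosSemidef) (hY : Y.PosSemidef) (hXY : (X - Y).PosSemidef) :
    let Rc := fun Z : Matrix (Fin n) (Fin n) ℝ => R + ∑ i, (B0 i)ᵀ * Z * B0 i
    let Lc := fun Z : Matrix (Fin n) (Fin n) ℝ => L + ∑ i, (A0 i)ᵀ * Z * B0 i
    let Qc := fun Z : Matrix (Fin n) (Fin n) ℝ => Q + ∑ i, (A0 i)ᵀ * Z * A0 i
    let Ac := fun Z : Matrix (Fin n) (Fin n) ℝ => A - B * (Rc Z)⁻¹ * (Lc Z)ᵀ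
    let Gc := fun Z : Matrix (Fin n) (Fin n) ℝ => B * (Rc Z)⁻¹ * Bᵀ
    let Hc := fun Z : Matrix (Fin n) (Fin n) ℝ => Qc Z - Lc Z * (Rc Z)⁻¹ * (Lc Z)ᵀ
    let Ω := fun Z : Matrix (Fin n) (Fin n) ℝ =>
      Matrix.fromBlocks (-(Gc Z)) (-(Ac Z)) (-(Ac Z)ᵀ) (Hc Z)
    (Ω X - Ω Y).PosSemidef ∧
      ∀ W : Matrix (Fin n ⊕ Fin n) (Fin n) ℝ,
        (Wᵀ * Ω X * W - Wᵀ * Ω Y * W).PosSemidef := by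
  intro Rc Lc Qc Ac Gc Hc Ω
  have hRc : ∀ Z : Matrix (Fin n) (Fin n) ℝ, Z.PosSemidef → (Rc Z).PosDef := fun Z hZ =>
    hR.add_posSemidef <| posSemidef_sum _ fun i _ => by
      simpa using hZ.conjTranspose_mul_mul_same (B0 i)
  have hΩ : ∀ Z : Matrix (Fin n) (Fin n) ℝ, Z.PosSemidef →
      Ω Z = fromBlocks 0 (-A) (-Aᵀ) (Qc Z) -
        fromRows (-B) (Lc Z) * (Rc Z)⁻¹ * (fromRows (-B) (Lc Z))ᵀ :=
    fun Z hZ => fromBlocks_eq_sub_fromRows_mul_inv_mul_transpose A B (Qc Z) (Lc Z)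
      (isHermitian_iff_isSymm.mp (hRc Z hZ).1)
  have := (hRc X hX).isUnit.invertible
  have := (hRc Y hY).isUnit.invertible
  have hΓ := posSemidef_scareGamma_sub_scareGamma A B Q L R A0 B0 hXY
  have hmono : (Ω X - Ω Y).PosSemidef := by
    rw [hΩ X hX, hΩ Y hY]
    simpa only [conjTranspose_eq_transpose_of_trivial] using
      PosSemidef.schur_complement_sub_of_fromBlocks_sub (hRc X hX).1 (hRc Y hY).posSemidef
        (by simp only [conjTranspose_eq_transpose_of_trivial]; exact hΓ)
  refine ⟨hmono, fun W => ?_⟩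
  rw [← Matrix.sub_mul, ← Matrix.mul_sub]
  simpa using hmono.conjTranspose_mul_mul_same W
end
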